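/- Let n ≥ 5 and let c be a (5,8)-coloring of K_n in which the three edges ux, xy, yv (a path on the distinct vertices u, x, y, v) all have the same color. Then each of the edges uy, xv and uv forms a singleton monochromatic component; that is, no edge sharing a vertex with uy has the same color as uy, and similarly for xv and uv. -/

import Mathlib

/-- The number of distinct colors appearing on the (non-loop) edges of `K_n`
inside the vertex set `S`, under the edge-coloring `c`. -/
noncomputable def numColorsOn {n : ℕ} {C : Type*} (c : Sym2 (Fin n) → C) (S : Finset (Fin n)) : ℕ :=
  (c '' {e : Sym2 (Fin n) | e ∈ S.sym2 ∧ ¬ e.IsDiag}).ncard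

/-- `c` is a `(p,q)`-coloring of `K_n`: every set of `p` vertices spans edges
bearing at least `q` distinct colors. -/
def IsPQColoring (n p q : ℕ) {C : Type*} (c : Sym2 (Fin n) → C) : Prop :=
  ∀ S : Finset (Fin n), S.card = p → q ≤ numColorsOn c S

/-- The edge `ab` forms a singleton monochromatic component: no other edge
sharing an endpoint with `ab` receives the same color as `ab`. -/
def IsSingletonMonoEdge {n : ℕ} {C : Type*} (c : Sym2 (Fin n) → C) (a b : Fin n) : Prop :=
  ∀ w : Fin n, w ≠ a → w ≠ b → c s(a, w) ≠ c s(a, b) ∧ c s(b, w) ≠ c s(a, b)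

/-! Five vertices span ten edges and a `(5,8)`-coloring shows at least eight colors on them, so
at most two edges of a five-vertex set can repeat a color already present. The monochromatic path
`ux, xy, yv` uses up both repetitions on any five vertices containing it, so no further pair of
distinct edges among those vertices may share a color; every edge adjacent to `uy`, `xv` or `uv`
lies in such a five-vertex set together with the path. -/

open Finset

def edgesOn {α : Type*} [DecidableEq α] (S : Finset α) : Finset (Sym2 α) :=
  {e ∈ S.sym2 | ¬ e.IsDiag}

lemma mk_mem_edgesOn {α : Type*} [DecidableEq α] {S : Finset α} {a b : α} :
    s(a, b) ∈ edgesOn S ↔ a ∈ S ∧ b ∈ S ∧ a ≠ b := by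
  simp [edgesOn, and_assoc]

lemma card_edgesOn {α : Type*} [DecidableEq α] (S : Finset α) :
    #(edgesOn S) = (#S).choose 2 := by
  rw [edgesOn, sym2_eq_image, Sym2.filter_image_mk_not_isDiag, Sym2.card_image_offDiag]

lemma edgesOn_mono {α : Type*} [DecidableEq α] {S S' : Finset α} (h : S ⊆ S') :
    edgesOn S ⊆ edgesOn S' :=
  filter_subset_filter _ (sym2_mono h)

lemma numColorsOn_eq_card_image {n : ℕ} {C : Type*} [DecidableEq C] (c : Sym2 (Fin n) → C)
    (S : Finset (Fin n)) : numColorsOn c S = #((edgesOn S).image c) := by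
  rw [numColorsOn, ← Set.ncard_coe_finset, coe_image]
  congr 2
  ext e
  simp [edgesOn]

lemma IsPQColoring.card_add_le_card_image_add {n p q : ℕ} {C : Type*} [DecidableEq C]
    {c : Sym2 (Fin n) → C} (hc : IsPQColoring n p q c) (hpn : p ≤ n) {S : Finset (Fin n)}
    (hS : #S ≤ p) {T : Finset (Sym2 (Fin n))} (hT : T ⊆ edgesOn S) :
    #T + q ≤ #(T.image c) + p.choose 2 := by
  obtain ⟨S', hSS', hS'⟩ := exists_superset_card_eq hS (by simpa using hpn)
  have hTS' : T ⊆ edgesOn S' := hT.trans (edgesOn_mono hSS')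
  have hq := hc S' hS'
  rw [numColorsOn_eq_card_image] at hq
  have hcover : (edgesOn S').image c ⊆ (edgesOn S' \ T).image c ∪ T.image c := by
    rw [← image_union, sdiff_union_of_subset hTS']
  have hdiff : #(edgesOn S' \ T) + #T = p.choose 2 := by
    rw [card_sdiff_add_card_eq_card hTS', card_edgesOn, hS']
  have := (card_le_card hcover).trans (card_union_le _ _)
  have := card_image_le (s := edgesOn S' \ T) (f := c)
  omega

lemma IsPQColoring.color_ne_of_monochromatic_triple {n p q : ℕ} {C : Type*}
    {c : Sym2 (Fin n) → C} (hc : IsPQColoring n p q c) (hpn : p ≤ n) (hpq : p.choose 2 ≤ q + 2)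
    {S : Finset (Fin n)} (hS : #S ≤ p)
    {e₁ e₂ e₃ e e' : Sym2 (Fin n)} (h₁ : e₁ ∈ edgesOn S) (h₂ : e₂ ∈ edgesOn S)
    (h₃ : e₃ ∈ edgesOn S) (he : e ∈ edgesOn S) (he' : e' ∈ edgesOn S)
    (h₁₂ : e₁ ≠ e₂) (h₁₃ : e₁ ≠ e₃) (h₂₃ : e₂ ≠ e₃) (hc₂ : c e₂ = c e₁) (hc₃ : c e₃ = c e₁)
    (he₁ : e ≠ e₁) (he₂ : e ≠ e₂) (he₃ : e ≠ e₃) (hee' : e' ≠ e) :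
    c e' ≠ c e := by
  classical
  intro hce
  have hT : ({e₁, e₂, e₃, e, e'} : Finset _) ⊆ edgesOn S := by
    simp only [insert_subset_iff, singleton_subset_iff]
    exact ⟨h₁, h₂, h₃, he, he'⟩
  have hcount := hc.card_add_le_card_image_add hpn hS hT
  have hcolors : ({e₁, e₂, e₃, e, e'} : Finset _).image c = {c e₁, c e} := by
    simp [image_insert, hc₂, hc₃, hce]
  rw [hcolors] at hcount
  by_cases hce₁ : c e = c e₁
  · have hcard : #({e₁, e₂, e₃, e} : Finset _) ≤ #({e₁, e₂, e₃, e, e'} : Finset _) :=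
      card_le_card (by simp [insert_subset_iff])
    rw [card_insert_of_notMem (by simp [h₁₂, h₁₃, he₁.symm]),
      card_insert_of_notMem (by simp [h₂₃, he₂.symm]),
      card_insert_of_notMem (by simp [he₃.symm]), card_singleton] at hcard
    simp only [hce₁, mem_singleton, insert_eq_of_mem, card_singleton] at hcount
    omega
  · have he'₁ : e' ≠ e₁ := by rintro rfl; exact hce₁ hce.symm
    have he'₂ : e' ≠ e₂ := by rintro rfl; exact hce₁ (hce.symm.trans hc₂)
    have he'₃ : e' ≠ e₃ := by rintro rfl; exact hce₁ (hce.symm.trans hc₃)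
    rw [card_insert_of_notMem (by simp [h₁₂, h₁₃, he₁.symm, he'₁.symm]),
      card_insert_of_notMem (by simp [h₂₃, he₂.symm, he'₂.symm]),
      card_insert_of_notMem (by simp [he₃.symm, he'₃.symm]),
      card_insert_of_notMem (by simp [hee'.symm]), card_singleton,
      card_insert_of_notMem (by simp [Ne.symm hce₁]), card_singleton] at hcount
    omega

lemma isSingletonMonoEdge_of_monochromatic_path {n : ℕ} {C : Type*} {c : Sym2 (Fin n) → C}
    (hc : IsPQColoring n 5 8 c) (hn : 5 ≤ n) {u x y v a b : Fin n}
    (hux : u ≠ x) (hxy : x ≠ y) (hyv : y ≠ v) (huy : u ≠ y) (hxv : x ≠ v)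
    (h1 : c s(u, x) = c s(x, y)) (h2 : c s(u, x) = c s(y, v))
    (ha : a ∈ ({u, x, y, v} : Finset _)) (hb : b ∈ ({u, x, y, v} : Finset _)) (hab : a ≠ b)
    (habux : s(a, b) ≠ s(u, x)) (habxy : s(a, b) ≠ s(x, y)) (habyv : s(a, b) ≠ s(y, v)) :
    IsSingletonMonoEdge c a b := by
  intro w hwa hwb
  set S : Finset (Fin n) := insert w {u, x, y, v}
  have hS : #S ≤ 5 := (card_insert_le _ _).trans (by grind [card_le_four])
  have mem : ∀ {p q}, p ∈ S → q ∈ S → p ≠ q → s(p, q) ∈ edgesOn S :=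
    fun hp hq hpq => mk_mem_edgesOn.2 ⟨hp, hq, hpq⟩
  obtain ⟨hu, hx, hy, hv⟩ : u ∈ S ∧ x ∈ S ∧ y ∈ S ∧ v ∈ S := by simp [S]
  have hw : w ∈ S := mem_insert_self _ _
  have haS : a ∈ S := mem_insert_of_mem ha
  have hbS : b ∈ S := mem_insert_of_mem hb
  have key := fun {e'} (he' : e' ∈ edgesOn S) (hee' : e' ≠ s(a, b)) =>
    hc.color_ne_of_monochromatic_triple hn (by decide) hS (mem hu hx hux) (mem hx hy hxy)
      (mem hy hv hyv) (mem haS hbS hab) he' (by simp [hux, huy]) (by simp [huy, hxy])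
      (by simp [hxy, hxv]) h1.symm h2.symm habux habxy habyv hee'
  exact ⟨key (mem haS hw hwa.symm) (by simp [hab, hwb]),
    key (mem hbS hw hwb.symm) (by simp [hab.symm, hwa])⟩

/-- In a `(5,8)`-coloring of `K_n` (`n ≥ 5`), if the three edges `ux`, `xy`, `yv`
of a path on the distinct vertices `u, x, y, v` all have the same color, then each
of `uy`, `xv`, `uv` forms a singleton monochromatic component. -/
theorem path_forces_singleton_edges (n : ℕ) (hn : 5 ≤ n) (C : Type)
    (c : Sym2 (Fin n) → C) (hc : IsPQColoring n 5 8 c) (u x y v : Fin n)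
    (hux : u ≠ x) (huy : u ≠ y) (huv : u ≠ v) (hxy : x ≠ y) (hxv : x ≠ v) (hyv : y ≠ v)
    (h1 : c s(u, x) = c s(x, y)) (h2 : c s(u, x) = c s(y, v)) :
    IsSingletonMonoEdge c u y ∧ IsSingletonMonoEdge c x v ∧ IsSingletonMonoEdge c u v := by
  refine ⟨?_, ?_, ?_⟩ <;>
    apply isSingletonMonoEdge_of_monochromatic_path hc hn hux hxy hyv huy hxv h1 h2 <;>
    simp [hux, huy, huv, hxy, hxv, hyv, hux.symm, huy.symm, huv.symm,
      hxy.symm, hxv.symm, hyv.symm]
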